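/- arXiv:1507.03028 — 6 statements merged into one kernel-verified Lean document; each statement's English description precedes it below -/
import Mathlib

section
/- Let F be a finitely generated free group and φ : F → F a group endomorphism. Then there exists a positive integer K such that ker(φ^k) = ker(φ^K) for all k ≥ K; consequently the union ⋃_{k≥1} ker(φ^k) (equivalently, the supremum ⨆_k ker(φ^k)) equals ker(φ^K). -/
/-!
The images `φ^k F` form a descending chain of subgroups of `F`; by Nielsen–Schreier they are
free, and `φ` maps each one onto the next, so their ranks (read off from
`#Hom(−, ℤ/2) = 2 ^ rank`) form a non-increasing sequence of natural numbers, which is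
eventually constant. A surjection between free groups of the same
finite rank is an isomorphism, because finitely generated residually finite groups (free groups
among them) are Hopfian. Hence `φ` is eventually injective on `φ^k F`, which says exactly that
`ker φ^(k+1) = ker φ^k`.
-/

open Function

theorem Equiv.Perm.exists_apply_eq_of_injective {X ι : Type*} [Finite X] {u v : ι → X}
    (hu : Injective u) (hv : Injective v) : ∃ σ : Perm X, ∀ i, σ (u i) = v i := by
  classical
  let e := (Equiv.ofInjective u hu).symm.trans (Equiv.ofInjective v hv)
  refine ⟨e.extendSubtype, fun i => ?_⟩
  rw [Equiv.extendSubtype_apply_of_mem e (u i) ⟨i, rfl⟩]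
  simp [e]

namespace FreeGroup

variable {α X : Type*}

theorem IsReduced.snd_eq_of_fst_eq {L : List (α × Bool)} (hL : IsReduced L) {i : ℕ}
    (hi : i + 1 < L.length) (hfst : L[i].1 = L[i + 1].1) : L[i].2 = L[i + 1].2 :=
  List.isChain_iff_getElem.mp hL i hi hfst

theorem map_mk_apply_last_of_chain (f : FreeGroup α →* Equiv.Perm X) :
    ∀ (L : List (α × Bool)) (p : Fin (L.length + 1) → X),
      (∀ i : Fin L.length, f (mk [L[i]]) (p i.succ) = p i.castSucc) →
        f (mk L) (p (Fin.last _)) = p 0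
  | [], p, _ => by simp [← one_eq_mk]
  | l :: L, p, hp => by
    have hL := map_mk_apply_last_of_chain f L (p ∘ Fin.succ) fun i => by simpa using hp i.succ
    have hmk : mk (l :: L) = mk [l] * mk L := by rw [mul_mk]; rfl
    rw [hmk, _root_.map_mul, Equiv.Perm.mul_apply,
      show Fin.last (l :: L).length = (Fin.last L.length).succ from rfl,
      ← comp_apply (f := p), hL]
    exact hp 0

/- `σ a` sends `i + 1` to `i` for each letter `(a, true)` at position `i` of `L`, and `i` to
`i + 1` for each letter `(a, false)`; these prescriptions are injective because `L` is reduced.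
Then every letter moves the point `i + 1` to `i`, so `lift σ (mk L)` moves the last point
to `0`. -/
theorem exists_lift_mk_ne_one {L : List (α × Bool)} (hL : IsReduced L) (hne : L ≠ []) :
    ∃ σ : α → Equiv.Perm (Fin (L.length + 1)), lift σ (mk L) ≠ 1 := by
  have hred : ∀ i j : Fin L.length, (j : ℕ) = i + 1 →
      L[i].1 = L[j].1 → L[i].2 = L[j].2 := by
    rintro i ⟨j, hj⟩ rfl
    exact hL.snd_eq_of_fst_eq hj
  have hperm : ∀ a, ∃ s : Equiv.Perm (Fin (L.length + 1)),
      ∀ i : {i : Fin L.length // L[i].1 = a},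
        s (if L[i.1].2 then i.1.succ else i.1.castSucc) =
          if L[i.1].2 then i.1.castSucc else i.1.succ := by
    intro a
    apply Equiv.Perm.exists_apply_eq_of_injective
    all_goals
      rintro ⟨i, rfl⟩ ⟨j, hj⟩ h
      have h := congrArg Fin.val h
      dsimp only at h
      have hij := hred i j
      have hji := hred j i
      rw [Subtype.mk.injEq, Fin.ext_iff]
      split_ifs at h <;> simp at h <;> grind
  choose σ hσ using hperm
  refine ⟨σ, fun h => ?_⟩
  have hchain := map_mk_apply_last_of_chain (lift σ) L id fun i => by
    have hi := hσ L[i].1 ⟨i, rfl⟩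
    simp only [Fin.getElem_fin] at hi
    rcases hb : L[(i : ℕ)].2 <;> simp only [hb, Bool.false_eq_true, if_true, if_false] at hi <;>
      simp [lift_mk, hb, hi, Equiv.symm_apply_eq]
  rw [h] at hchain
  simp [Fin.ext_iff, hne] at hchain

instance residuallyFinite : Group.ResiduallyFinite (FreeGroup α) := by
  classical
  refine Group.residuallyFinite_of_forall_exists_finite_monoidHom.{_, 0} fun w hw => ?_
  obtain ⟨σ, hσ⟩ := exists_lift_mk_ne_one (isReduced_toWord (x := w)) (by simpa using hw)
  exact ⟨_, _, inferInstance, lift σ, by rwa [mk_toWord] at hσ⟩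

end FreeGroup

namespace Group

variable {G H Q : Type*} [Group G] [Group H] [Group Q]

theorem ResiduallyFinite.of_injective [ResiduallyFinite H] {f : G →* H} (hf : Injective f) :
    ResiduallyFinite G := by
  refine residuallyFinite_iff_exists_finiteIndexNormalSubgroup.mpr fun g hg => ?_
  obtain ⟨K, hgK⟩ :=
    exists_finiteIndexNormalSubgroup_notMem (f g) ((map_ne_one_iff f hf).mpr hg)
  exact ⟨K.comap f, hgK⟩

instance FG.finite_monoidHom [FG G] [Finite Q] : Finite (G →* Q) := by
  obtain ⟨S, hS⟩ := FG.out (G := G)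
  exact Finite.of_injective (fun f : G →* Q => fun s : S => f s)
    fun f g hfg => MonoidHom.eq_of_eqOn_dense hS fun x hx => congrFun hfg ⟨x, hx⟩

/- Precomposition with a surjective `f` is injective on the finite set `G →* G ⧸ K`, hence
surjective, so the quotient map by any finite-index `K` factors through `f`. -/
theorem ResiduallyFinite.injective_of_surjective [FG G] [ResiduallyFinite G] {f : G →* G}
    (hf : Surjective f) : Injective f := by
  refine (injective_iff_map_eq_one f).mpr fun w hw => by_contra fun hw1 => ?_
  obtain ⟨K, hwK⟩ := exists_finiteIndexNormalSubgroup_notMem w hw1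
  have hcomp : Injective fun π : G →* G ⧸ K.toSubgroup => π.comp f :=
    fun _ _ h => (MonoidHom.cancel_right hf).mp h
  obtain ⟨π, hπ⟩ := Finite.injective_iff_surjective.mp hcomp (QuotientGroup.mk' K.toSubgroup)
  apply hwK
  rw [← FiniteIndexNormalSubgroup.mem_toSubgroup_iff, ← QuotientGroup.eq_one_iff,
    ← QuotientGroup.mk'_apply, ← hπ]
  simp [hw]

end Group

namespace IsFreeGroup

variable {G H : Type*} [Group G] [Group H] [IsFreeGroup G] [IsFreeGroup H]

instance residuallyFinite : Group.ResiduallyFinite G :=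
  .of_injective (f := (toFreeGroup G).toMonoidHom) (toFreeGroup G).injective

theorem finite_generators [Group.FG G] : Finite (Generators G) := by
  have : Finite (Generators G → Multiplicative (ZMod 2)) := .of_equiv _ lift.symm
  by_contra hinf
  have := not_finite_iff_infinite.mp hinf
  exact not_finite (Generators G → Multiplicative (ZMod 2))

theorem card_monoidHom [Group.FG G] (Q : Type*) [Group Q] :
    Nat.card (G →* Q) = Nat.card Q ^ Nat.card (Generators G) := by
  have := finite_generators (G := G)
  rw [← Nat.card_fun, Nat.card_congr lift]

theorem card_generators_le_of_surjective [Group.FG G] {f : G →* H} (hf : Surjective f) :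
    Nat.card (Generators H) ≤ Nat.card (Generators G) := by
  have : Group.FG H := Group.fg_of_surjective hf
  have hle :
      Nat.card (H →* Multiplicative (ZMod 2)) ≤ Nat.card (G →* Multiplicative (ZMod 2)) :=
    Nat.card_le_card_of_injective _ fun _ _ h => (MonoidHom.cancel_right hf).mp h
  rw [card_monoidHom, card_monoidHom] at hle
  exact (Nat.pow_le_pow_iff_right (by simp)).mp hle

theorem injective_of_surjective_of_card_generators_le [Group.FG G] {f : G →* H}
    (hf : Surjective f) (hcard : Nat.card (Generators G) ≤ Nat.card (Generators H)) :
    Injective f := by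
  have : Group.FG H := Group.fg_of_surjective hf
  have := finite_generators (G := G)
  have := finite_generators (G := H)
  obtain ⟨e⟩ := Finite.card_eq.mp (hcard.antisymm (card_generators_le_of_surjective hf)).symm
  let φ : H ≃* G :=
    (toFreeGroup H).trans ((FreeGroup.freeGroupCongr e).trans (toFreeGroup G).symm)
  have hφf : Injective (φ.toMonoidHom.comp f) :=
    Group.ResiduallyFinite.injective_of_surjective (φ.surjective.comp hf)
  exact hφf.of_comp (f := φ)

end IsFreeGroup

theorem Monotone.biSup_ge_eq_of_forall_ge_eq {α : Type*} [CompleteLattice α] {s : ℕ → α}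
    (hs : Monotone s) {m K : ℕ} (hmK : m ≤ K) (hK : ∀ k ≥ K, s k = s K) :
    ⨆ k ≥ m, s k = s K :=
  le_antisymm (iSup₂_le fun k _ => (le_total k K).elim (fun h => hs h) fun h => (hK k h).le)
    (le_iSup₂_of_le K hmK le_rfl)

namespace Monoid.End

variable {G : Type*} [Group G] (φ : Monoid.End G)

theorem mem_ker_pow {k : ℕ} {x : G} : x ∈ MonoidHom.ker (φ ^ k) ↔ φ^[k] x = 1 := by
  rw [← coe_pow]; rfl

theorem mem_range_pow {k : ℕ} {y : G} :
    y ∈ MonoidHom.range (φ ^ k) ↔ ∃ x, φ^[k] x = y := by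
  rw [← coe_pow]; rfl

def rangePowRestrict (k : ℕ) : MonoidHom.range (φ ^ k) →* MonoidHom.range (φ ^ (k + 1)) :=
  MonoidHom.codRestrict ((φ : G →* G).comp (Subgroup.subtype _)) _ fun y => by
    obtain ⟨x, hx⟩ := (mem_range_pow φ).mp y.2
    exact (mem_range_pow φ).mpr ⟨x, by rw [iterate_succ_apply', hx]; rfl⟩

theorem rangePowRestrict_surjective (k : ℕ) : Surjective (φ.rangePowRestrict k) := by
  rintro ⟨y, hy⟩
  obtain ⟨x, rfl⟩ := (mem_range_pow φ).mp hy
  exact ⟨⟨φ^[k] x, (mem_range_pow φ).mpr ⟨x, rfl⟩⟩,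
    Subtype.ext (iterate_succ_apply' φ k x).symm⟩

theorem ker_pow_succ_eq_of_injective {k : ℕ} (h : Injective (φ.rangePowRestrict k)) :
    MonoidHom.ker (φ ^ (k + 1)) = MonoidHom.ker (φ ^ k) := by
  ext x
  rw [mem_ker_pow, mem_ker_pow, iterate_succ_apply']
  have := (injective_iff_map_eq_one _).mp h ⟨φ^[k] x, (mem_range_pow φ).mpr ⟨x, rfl⟩⟩
  exact ⟨fun hx => congrArg Subtype.val (this (Subtype.ext hx)), fun hx => by rw [hx, map_one]⟩

theorem ker_pow_monotone : Monotone fun k => MonoidHom.ker (φ ^ k) :=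
  monotone_nat_of_le_succ fun k x hx => (mem_ker_pow φ).mpr <| by
    rw [iterate_succ_apply', (mem_ker_pow φ).mp hx, map_one]

theorem exists_forall_ge_injective_rangePowRestrict [IsFreeGroup G] [Group.FG G] :
    ∃ K, ∀ k ≥ K, Injective (φ.rangePowRestrict k) := by
  have hrank : Antitone fun k => Nat.card (IsFreeGroup.Generators (MonoidHom.range (φ ^ k))) :=
    antitone_nat_of_succ_le fun k =>
      IsFreeGroup.card_generators_le_of_surjective (φ.rangePowRestrict_surjective k)
  obtain ⟨K, hK⟩ := WellFoundedLT.antitone_chain_condition hrank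
  exact ⟨K, fun k hk => IsFreeGroup.injective_of_surjective_of_card_generators_le
    (φ.rangePowRestrict_surjective k) ((hK k hk).symm.trans (hK (k + 1) (by omega))).le⟩

end Monoid.End

theorem stmt_0 (F : Type*) [Group F] [IsFreeGroup F] [Group.FG F] (φ : Monoid.End F) :
    ∃ K : ℕ, 0 < K ∧ (∀ k : ℕ, K ≤ k → MonoidHom.ker (φ ^ k) = MonoidHom.ker (φ ^ K)) ∧
      (⨆ k ≥ 1, MonoidHom.ker (φ ^ k)) = MonoidHom.ker (φ ^ K) := by
  obtain ⟨K, hK⟩ := φ.exists_forall_ge_injective_rangePowRestrict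
  have hstable : ∀ k, K + 1 ≤ k → MonoidHom.ker (φ ^ k) = MonoidHom.ker (φ ^ (K + 1)) := by
    intro k hk
    induction k, hk using Nat.le_induction with
    | base => rfl
    | succ k hk ih => rw [φ.ker_pow_succ_eq_of_injective (hK k (by omega)), ih]
  exact ⟨K + 1, K.succ_pos, hstable,
    φ.ker_pow_monotone.biSup_ge_eq_of_forall_ge_eq (Nat.le_add_left 1 K) hstable⟩
end

section
/- Let p : X̃ → X be a covering map with X̃ preconnected, let Φ be a semiflow on X, and let Φ̃ : ℝ≥0 × X̃ → X̃ be a continuous map with Φ̃(0, x̃) = x̃ and p(Φ̃(t, x̃)) = Φ(t, p(x̃)) for all t ∈ ℝ≥0 and x̃ ∈ X̃. Then Φ̃ is itself a semiflow: Φ̃(s + t, x̃) = Φ̃(s, Φ̃(t, x̃)) for all s, t ∈ ℝ≥0 and x̃ ∈ X̃. -/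
open scoped NNReal

theorem stmt_6 {X Xt : Type*} [TopologicalSpace X] [TopologicalSpace Xt]
    [PreconnectedSpace Xt]
    (p : Xt → X) (hp : IsCoveringMap p)
    (Φ : ℝ≥0 × X → X) (hΦc : Continuous Φ)
    (hΦ0 : ∀ x, Φ (0, x) = x)
    (hΦadd : ∀ (s t : ℝ≥0) (x : X), Φ (s + t, x) = Φ (s, Φ (t, x)))
    (Φt : ℝ≥0 × Xt → Xt) (hΦtc : Continuous Φt)
    (hΦt0 : ∀ a, Φt (0, a) = a)
    (hlift : ∀ (t : ℝ≥0) (a : Xt), p (Φt (t, a)) = Φ (t, p a)) :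
    ∀ (s t : ℝ≥0) (a : Xt), Φt (s + t, a) = Φt (s, Φt (t, a)) := by
  intro s t a
  set F : ℝ≥0 × Xt → Xt := fun q => Φt (q.1 + t, q.2) with hF
  set G : ℝ≥0 × Xt → Xt := fun q => Φt (q.1, Φt (t, q.2)) with hG
  have hFc : Continuous F := hΦtc.comp (by continuity)
  have hGc : Continuous G := hΦtc.comp (by continuity)
  have key : F = G := by
    refine hp.eq_of_comp_eq hFc hGc ?_ ((0 : ℝ≥0), a) (by simp [hF, hG, hΦt0])
    funext q
    simp only [Function.comp, hF, hG, hlift, hΦadd]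
  exact congrFun key (s, a)
end

section
/- Let p : X̃ → X be a covering map with X̃ preconnected, let Φ be a semiflow on X, let Φ̃ be a lift of Φ to X̃, and let T : X̃ → X̃ be a continuous map with p ∘ T = p (a deck transformation of p). Then T commutes with the lifted semiflow: T(Φ̃(t, x̃)) = Φ̃(t, T(x̃)) for all t ∈ ℝ≥0 and x̃ ∈ X̃. -/
open scoped NNReal

theorem stmt_8 {X Xt : Type*} [TopologicalSpace X] [TopologicalSpace Xt]
    [PreconnectedSpace Xt]
    (p : Xt → X) (hp : IsCoveringMap p)
    (Φ : ℝ≥0 × X → X) (hΦc : Continuous Φ)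
    (hΦ0 : ∀ x, Φ (0, x) = x)
    (hΦadd : ∀ (s t : ℝ≥0) (x : X), Φ (s + t, x) = Φ (s, Φ (t, x)))
    (Φt : ℝ≥0 × Xt → Xt) (hΦtc : Continuous Φt)
    (hΦt0 : ∀ a, Φt (0, a) = a)
    (hlift : ∀ (t : ℝ≥0) (a : Xt), p (Φt (t, a)) = Φ (t, p a))
    (T : Xt → Xt) (hTc : Continuous T) (hT : ∀ a, p (T a) = p a) :
    ∀ (t : ℝ≥0) (a : Xt), T (Φt (t, a)) = Φt (t, T a) := by
  intro t a
  have key : (fun q : ℝ≥0 × Xt => T (Φt q)) = fun q => Φt (q.1, T q.2) := by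
    have hcomp : p ∘ (fun q : ℝ≥0 × Xt => T (Φt q)) = p ∘ (fun q : ℝ≥0 × Xt => Φt (q.1, T q.2)) := by
      funext q
      simp only [Function.comp_apply]
      rw [hT, hlift, hlift, hT]
    exact hp.eq_of_comp_eq (hTc.comp hΦtc)
      (hΦtc.comp (continuous_fst.prodMk (hTc.comp continuous_snd))) hcomp (0, a)
      (by simp [hΦt0])
  exact congrFun key (t, a)
end

section
/- Let p : X̃ → X be a covering map and Φ a semiflow on X. Then there exists a lift of Φ to X̃, i.e. a continuous map Φ̃ : ℝ≥0 × X̃ → X̃ with Φ̃(0, x̃) = x̃ and p(Φ̃(t, x̃)) = Φ(t, p(x̃)) for all t ∈ ℝ≥0 and x̃ ∈ X̃. -/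
open scoped NNReal
open Set Filter Topology unitInterval

/-!
Covering maps lift homotopies parametrized by the unit interval `I`. Reparametrizing `[0, T]` by `I`
lifts `(t, a) ↦ Φ (t, p a)` on `[0, T] × X̃`; by uniqueness of path lifting these lifts agree
on their common domains, so near any `(t₀, a₀)` the map `(t, a) ↦ lift on [0, t + 1]` coincides
with the single continuous lift on `[0, t₀ + 1]`.
-/

noncomputable def nnrealToUnitInterval (T t : ℝ≥0) : I := projIcc 0 1 zero_le_one (t / T : ℝ)

lemma continuous_nnrealToUnitInterval (T : ℝ≥0) : Continuous (nnrealToUnitInterval T) := by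
  unfold nnrealToUnitInterval; fun_prop

@[simp]
lemma nnrealToUnitInterval_zero (T : ℝ≥0) : nnrealToUnitInterval T 0 = 0 := by
  ext
  simp [nnrealToUnitInterval]

lemma mul_toNNReal_nnrealToUnitInterval {T t : ℝ≥0} (ht : t ≤ T) :
    T * toNNReal (nnrealToUnitInterval T t) = t := by
  rcases eq_or_ne T 0 with rfl | hT
  · simp [nonpos_iff_eq_zero.1 ht]
  have hmem : (t / T : ℝ) ∈ Icc 0 1 :=
    ⟨by positivity, div_le_one_of_le₀ (by exact_mod_cast ht) T.2⟩
  ext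
  simp [nnrealToUnitInterval, projIcc_of_mem _ hmem, mul_div_cancel₀ _ (NNReal.coe_ne_zero.2 hT)]

namespace IsCoveringMap

variable {E X A : Type*} [TopologicalSpace E] [TopologicalSpace X] [TopologicalSpace A]
  {p : E → X} (cov : IsCoveringMap p) (H : C(ℝ≥0 × A, X)) (f : C(A, E))
  (H_0 : ∀ a, H (0, a) = p (f a))

/-- Lifts `H` on `[0, T] × A`; for `t > T` the time is clamped to `T`. -/
noncomputable def liftHomotopyUpTo (T : ℝ≥0) (ta : ℝ≥0 × A) : E :=
  cov.liftHomotopy (H.comp ⟨fun sa : I × A ↦ (T * toNNReal sa.1, sa.2), by fun_prop⟩) f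
    (by simpa using H_0) (nnrealToUnitInterval T ta.1, ta.2)

lemma continuous_liftHomotopyUpTo (T : ℝ≥0) : Continuous (cov.liftHomotopyUpTo H f H_0 T) :=
  (ContinuousMap.continuous _).comp
    (((continuous_nnrealToUnitInterval T).comp continuous_fst).prodMk continuous_snd)

lemma liftHomotopyUpTo_lifts {T t : ℝ≥0} (ht : t ≤ T) (a : A) :
    p (cov.liftHomotopyUpTo H f H_0 T (t, a)) = H (t, a) := by
  refine (congr_fun (cov.liftHomotopy_lifts _ f _) (nnrealToUnitInterval T t, a)).trans ?_
  simp [mul_toNNReal_nnrealToUnitInterval ht]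

lemma liftHomotopyUpTo_zero (T : ℝ≥0) (a : A) : cov.liftHomotopyUpTo H f H_0 T (0, a) = f a := by
  unfold liftHomotopyUpTo
  rw [nnrealToUnitInterval_zero]
  exact cov.liftHomotopy_zero _ f _ a

lemma liftHomotopyUpTo_eq_liftHomotopyUpTo {T T' t : ℝ≥0} (hT : t ≤ T) (hT' : t ≤ T') (a : A) :
    cov.liftHomotopyUpTo H f H_0 T (t, a) = cov.liftHomotopyUpTo H f H_0 T' (t, a) := by
  have hcont (S : ℝ≥0) : Continuous fun s ↦ cov.liftHomotopyUpTo H f H_0 S (s, a) :=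
    (cov.continuous_liftHomotopyUpTo H f H_0 S).comp (.prodMk_left a)
  refine cov.eqOn_of_comp_eqOn isPreconnected_Icc (hcont T).continuousOn (hcont T').continuousOn
    (fun s hs ↦ ?_) (left_mem_Icc.2 zero_le) ?_ ⟨zero_le, le_min hT hT'⟩
  · simp only [Function.comp_apply,
      cov.liftHomotopyUpTo_lifts H f H_0 (hs.2.trans (min_le_left _ _)),
      cov.liftHomotopyUpTo_lifts H f H_0 (hs.2.trans (min_le_right _ _))]
  · simp only [liftHomotopyUpTo_zero]

include cov H_0 in
theorem exists_lift_nnreal_homotopy :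
    ∃ G : C(ℝ≥0 × A, E), p ∘ G = H ∧ ∀ a, G (0, a) = f a := by
  set L := cov.liftHomotopyUpTo H f H_0
  refine ⟨⟨fun ta ↦ L (ta.1 + 1) ta, continuous_iff_continuousAt.2 fun ⟨t₀, a₀⟩ ↦ ?_⟩,
    funext fun ⟨t, a⟩ ↦ cov.liftHomotopyUpTo_lifts H f H_0 le_self_add a,
    fun a ↦ cov.liftHomotopyUpTo_zero H f H_0 _ a⟩
  refine (cov.continuous_liftHomotopyUpTo H f H_0 (t₀ + 1)).continuousAt.congr ?_
  filter_upwards [continuous_fst.continuousAt.preimage_mem_nhds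
    (Iio_mem_nhds (lt_add_one t₀))] with ⟨t, a⟩ ht
  exact cov.liftHomotopyUpTo_eq_liftHomotopyUpTo H f H_0 ht.le le_self_add a

end IsCoveringMap

theorem stmt_9_general {X Xt : Type*} [TopologicalSpace X] [TopologicalSpace Xt]
    (p : Xt → X) (hp : IsCoveringMap p)
    (Φ : ℝ≥0 × X → X) (hΦc : Continuous Φ)
    (hΦ0 : ∀ x, Φ (0, x) = x) :
    ∃ Φt : ℝ≥0 × Xt → Xt, Continuous Φt ∧ (∀ a, Φt (0, a) = a) ∧
      ∀ (t : ℝ≥0) (a : Xt), p (Φt (t, a)) = Φ (t, p a) := by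
  have hp_cont := hp.continuous
  obtain ⟨G, hG, hG0⟩ := hp.exists_lift_nnreal_homotopy
    ⟨fun ta ↦ Φ (ta.1, p ta.2), by fun_prop⟩ (.id Xt) (fun a ↦ hΦ0 (p a))
  exact ⟨G, G.continuous, hG0, fun t a ↦ congr_fun hG (t, a)⟩

theorem stmt_9 {X Xt : Type*} [TopologicalSpace X] [TopologicalSpace Xt]
    (p : Xt → X) (hp : IsCoveringMap p)
    (Φ : ℝ≥0 × X → X) (hΦc : Continuous Φ)
    (hΦ0 : ∀ x, Φ (0, x) = x)
    (hΦadd : ∀ (s t : ℝ≥0) (x : X), Φ (s + t, x) = Φ (s, Φ (t, x))) :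
    ∃ Φt : ℝ≥0 × Xt → Xt, Continuous Φt ∧ (∀ a, Φt (0, a) = a) ∧
      ∀ (t : ℝ≥0) (a : Xt), p (Φt (t, a)) = Φ (t, p a) :=
  stmt_9_general p hp Φ hΦc hΦ0
end

section
/- Let p : X̃ → X and q : Ỹ → Y be covering maps, let Φ and Ψ be semiflows on X and Y respectively, and let Φ̃ and Ψ̃ be lifts of Φ and Ψ to X̃ and Ỹ respectively. Suppose β : Y → X is a continuous flow-equivariant map (β(Ψ(t, y)) = Φ(t, β(y)) for all t, y) and β̃ : Ỹ → X̃ is a continuous lift of β (p ∘ β̃ = β ∘ q). Then β̃ is flow-equivariant for the lifted semiflows: β̃(Ψ̃(t, ỹ)) = Φ̃(t, β̃(ỹ)) for all t ∈ ℝ≥0 and ỹ ∈ Ỹ. -/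
open scoped NNReal

theorem stmt_10 {X Xt Y Yt : Type*} [TopologicalSpace X] [TopologicalSpace Xt]
    [TopologicalSpace Y] [TopologicalSpace Yt]
    (p : Xt → X) (hp : IsCoveringMap p)
    (q : Yt → Y) (hq : IsCoveringMap q)
    (Φ : ℝ≥0 × X → X) (hΦc : Continuous Φ)
    (hΦ0 : ∀ x, Φ (0, x) = x)
    (hΦadd : ∀ (s t : ℝ≥0) (x : X), Φ (s + t, x) = Φ (s, Φ (t, x)))
    (Ψ : ℝ≥0 × Y → Y) (hΨc : Continuous Ψ)
    (hΨ0 : ∀ y, Ψ (0, y) = y)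
    (hΨadd : ∀ (s t : ℝ≥0) (y : Y), Ψ (s + t, y) = Ψ (s, Ψ (t, y)))
    (Φt : ℝ≥0 × Xt → Xt) (hΦtc : Continuous Φt)
    (hΦt0 : ∀ a, Φt (0, a) = a)
    (hΦtlift : ∀ (t : ℝ≥0) (a : Xt), p (Φt (t, a)) = Φ (t, p a))
    (Ψt : ℝ≥0 × Yt → Yt) (hΨtc : Continuous Ψt)
    (hΨt0 : ∀ b, Ψt (0, b) = b)
    (hΨtlift : ∀ (t : ℝ≥0) (b : Yt), q (Ψt (t, b)) = Ψ (t, q b))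
    (β : Y → X) (hβc : Continuous β)
    (hβ : ∀ (t : ℝ≥0) (y : Y), β (Ψ (t, y)) = Φ (t, β y))
    (βt : Yt → Xt) (hβtc : Continuous βt)
    (hβtlift : ∀ b : Yt, p (βt b) = β (q b)) :
    ∀ (t : ℝ≥0) (b : Yt), βt (Ψt (t, b)) = Φt (t, βt b) := by
  intro t b
  have h : (fun s : ℝ≥0 => βt (Ψt (s, b))) = fun s => Φt (s, βt b) := by
    refine hp.eq_of_comp_eq
      (hβtc.comp (hΨtc.comp (continuous_id.prodMk continuous_const)))
      (hΦtc.comp (continuous_id.prodMk continuous_const)) ?_ 0 ?_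
    · funext s
      simp only [Function.comp_apply]
      rw [hβtlift, hΨtlift, hβ, hΦtlift, hβtlift]
    · show βt (Ψt (0, b)) = Φt (0, βt b)
      rw [hΨt0, hΦt0]
  exact congrFun h t
end

section
/- Let X be a type, h : X → X a function, and A ⊆ X a nonempty subset such that the collection of image sets { h^j(A) : j ∈ ℕ } is a finite set of subsets of X. Then the set Ω = ⋂_{k ∈ ℕ} ⋃_{j ≥ k} h^j(A) is nonempty and satisfies h(Ω) = Ω, where h(Ω) denotes the image of Ω under h. -/
theorem stmt_13 {X : Type*} (h : X → X) (A : Set X) (hA : A.Nonempty)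
    (hfin : {S : Set X | ∃ j : ℕ, S = h^[j] '' A}.Finite) :
    (⋂ k : ℕ, ⋃ j ≥ k, h^[j] '' A).Nonempty ∧
      h '' (⋂ k : ℕ, ⋃ j ≥ k, h^[j] '' A) = ⋂ k : ℕ, ⋃ j ≥ k, h^[j] '' A := by
  set f : ℕ → Set X := fun j => h^[j] '' A with hf
  -- f is not injective
  have hrange : Set.range f ⊆ {S : Set X | ∃ j : ℕ, S = h^[j] '' A} := by
    rintro S ⟨j, rfl⟩; exact ⟨j, rfl⟩
  have hrf : (Set.range f).Finite := hfin.subset hrange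
  have hninj : ¬ Function.Injective f := fun hinj =>
    (Set.infinite_range_of_injective hinj) hrf
  obtain ⟨a, b, hab, hne⟩ : ∃ a b, f a = f b ∧ a ≠ b := by
    simp only [Function.Injective, not_forall] at hninj
    obtain ⟨a, b, hab, hne⟩ := hninj
    exact ⟨a, b, hab, hne⟩
  -- wlog m < n
  obtain ⟨m, n, hmn, heq⟩ : ∃ m n, m < n ∧ f m = f n := by
    rcases hne.lt_or_gt with hl | hl
    · exact ⟨a, b, hl, hab⟩
    · exact ⟨b, a, hl, hab.symm⟩
  set p := n - m with hpdef
  have hp : 0 < p := Nat.sub_pos_of_lt hmn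
  have hmpn : m + p = n := Nat.add_sub_cancel' hmn.le
  -- key: shifting by p beyond m doesn't change the image
  have key : ∀ s : ℕ, f (m + s + p) = f (m + s) := by
    intro s
    have heq' : h^[m] '' A = h^[n] '' A := heq
    have h1 : f (s + m) = f (s + n) := by
      simp only [hf]
      rw [Function.iterate_add, Set.image_comp, heq', ← Set.image_comp,
        ← Function.iterate_add]
    have : m + s + p = s + n := by omega
    rw [this, add_comm m s, h1]
  have periodic : ∀ j, m ≤ j → ∀ t : ℕ, f (j + t * p) = f j := by
    intro j hj t
    induction t with
    | zero => simp
    | succ t ih =>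
      obtain ⟨s, rfl⟩ := Nat.exists_eq_add_of_le hj
      have : m + s + (t + 1) * p = (m + (s + t * p)) + p := by ring
      rw [this, key (s + t * p)]
      have : m + (s + t * p) = m + s + t * p := by ring
      rw [this, ih]
  -- every f j with j ≥ m is contained in Ω
  have hsub : ∀ j, m ≤ j → f j ⊆ ⋂ k : ℕ, ⋃ j ≥ k, h^[j] '' A := by
    intro j hj x hx
    refine Set.mem_iInter.2 fun k => ?_
    refine Set.mem_iUnion₂.2 ⟨j + k * p, ?_, ?_⟩
    · have : k ≤ k * p := Nat.le_mul_of_pos_right k hp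
      omega
    · rw [show (h^[j + k * p] '' A) = f (j + k * p) from rfl, periodic j hj k]
      exact hx
  constructor
  · obtain ⟨x, hx⟩ := hA.image (h^[m])
    exact ⟨x, hsub m le_rfl hx⟩
  · ext y
    constructor
    · rintro ⟨x, hx, rfl⟩
      refine Set.mem_iInter.2 fun k => ?_
      have := Set.mem_iInter.1 hx k
      obtain ⟨j, hj, hxj⟩ := Set.mem_iUnion₂.1 this
      refine Set.mem_iUnion₂.2 ⟨j + 1, by omega, ?_⟩
      rw [Function.iterate_succ', Set.image_comp]
      exact ⟨x, hxj, rfl⟩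
    · intro hy
      have := Set.mem_iInter.1 hy (m + 1)
      obtain ⟨j, hj, hyj⟩ := Set.mem_iUnion₂.1 this
      obtain ⟨j', rfl⟩ : ∃ j', j = j' + 1 := ⟨j - 1, by omega⟩
      rw [Function.iterate_succ', Set.image_comp] at hyj
      obtain ⟨x, hx, rfl⟩ := hyj
      exact ⟨x, hsub j' (by omega) hx, rfl⟩
end
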